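/- arXiv:1907.07740 — 4 statements merged into one kernel-verified Lean document; each statement's English description precedes it below -/
import Mathlib

section
/- Let (g, τ) be an irreducible symmetric Lie algebra (g^{−τ} ≠ 0 and no nontrivial τ-invariant ideals) with g not semisimple. Then dim g = 1 and τ = −id. -/
/-!
Since `τ` is an automorphism, it maps the radical, the largest solvable ideal, into itself;
irreducibility therefore forces the radical to be all of `g`, so `g` is solvable. The derived
algebra of a nonzero solvable Lie algebra is a proper ideal, and it is `τ`-invariant, hence zero:
`g` is abelian and every subspace is an ideal. Then the fixed space of `τ` is an invariant proper
subspace, so it vanishes and `τ = -id` (as `z + τ z` is always fixed), and the line spanned by a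
`(-1)`-eigenvector is a nonzero invariant subspace, so it is all of `g`.
-/

open LieAlgebra Module

namespace LieAlgebra

variable {R L L' : Type*} [CommRing R] [LieRing L] [LieAlgebra R L] [LieRing L'] [LieAlgebra R L']

theorem comap_radical_le_radical [IsNoetherian R L'] {f : L →ₗ⁅R⁆ L'} (hf : Function.Injective f) :
    (radical R L').comap f ≤ radical R L := by
  let g : (radical R L').comap f →ₗ⁅R⁆ radical R L' :=
    { toFun := fun y => ⟨f y, y.2⟩
      map_add' := fun y z => by ext; simp
      map_smul' := fun c y => by ext; simp
      map_lie' := fun {y z} => by ext; simp }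
  have : IsSolvable ((radical R L').comap f) :=
    Function.Injective.lieAlgebra_isSolvable (f := g) fun y z h => Subtype.ext (hf congr($h.1))
  exact le_sSup this

theorem apply_mem_radical_of_involutive [IsNoetherian R L] {τ : L →ₗ⁅R⁆ L}
    (hτ : ∀ z, τ (τ z) = z) {y : L} (hy : y ∈ radical R L) : τ y ∈ radical R L :=
  comap_radical_le_radical (Function.LeftInverse.injective hτ) (by simpa [hτ] using hy)

theorem isSolvable_of_radical_eq_top [IsNoetherian R L] (h : radical R L = ⊤) : IsSolvable L := by
  have := radicalIsSolvable R L
  rw [h] at this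
  exact (solvable_iff_equiv_solvable LieIdeal.topEquiv).mp this

end LieAlgebra

section IsLieAbelian

variable {R L : Type*} [CommRing R] [LieRing L] [LieAlgebra R L] [IsLieAbelian L]

def LieIdeal.ofSubmodule (p : Submodule R L) : LieIdeal R L :=
  { p with lie_mem := fun {x y} _ => by rw [trivial_lie_zero]; exact p.zero_mem }

theorem Submodule.eq_bot_or_eq_top_of_isLieAbelian {f : L → L}
    (h : ∀ I : LieIdeal R L, (∀ x ∈ I, f x ∈ I) → I = ⊥ ∨ I = ⊤) (p : Submodule R L)
    (hp : ∀ x ∈ p, f x ∈ p) : p = ⊥ ∨ p = ⊤ := by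
  rcases h (.ofSubmodule p) hp with h | h
  · exact .inl congr(($h : Submodule R L))
  · exact .inr congr(($h : Submodule R L))

end IsLieAbelian

theorem LinearMap.apply_eq_neg_of_forall_invariant_eq_bot_or_eq_top {R V : Type*} [Ring R]
    [AddCommGroup V] [Module R V] {τ : V →ₗ[R] V} (hτ : ∀ z, τ (τ z) = z) (hmov : ∃ x, τ x ≠ x)
    (hirr : ∀ p : Submodule R V, (∀ y ∈ p, τ y ∈ p) → p = ⊥ ∨ p = ⊤) (y : V) : τ y = -y := by
  have hfix : τ.eqLocus LinearMap.id = ⊥ := by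
    refine (hirr _ fun z hz => ?_).resolve_right fun htop => ?_
    · simp_all
    · obtain ⟨x, hx⟩ := hmov
      exact hx (by simpa using htop.ge (Submodule.mem_top (x := x)))
  have : y + τ y ∈ τ.eqLocus LinearMap.id := by simp [hτ, add_comm]
  rw [hfix, Submodule.mem_bot] at this
  exact eq_neg_of_add_eq_zero_right this

theorem Module.finrank_eq_one_of_forall_invariant_eq_bot_or_eq_top {K V : Type*} [DivisionRing K]
    [AddCommGroup V] [Module K V] {f : V →ₗ[K] V} {x : V} (hx0 : x ≠ 0) (hx : f x ∈ K ∙ x)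
    (hirr : ∀ p : Submodule K V, (∀ y ∈ p, f y ∈ p) → p = ⊥ ∨ p = ⊤) : finrank K V = 1 := by
  have hinv : ∀ y ∈ K ∙ x, f y ∈ K ∙ x := by
    intro y hy
    obtain ⟨c, rfl⟩ := Submodule.mem_span_singleton.mp hy
    rw [map_smul]
    exact Submodule.smul_mem _ c hx
  refine (finrank_eq_one_iff_of_nonzero x hx0).mpr ((hirr _ hinv).resolve_left ?_)
  simpa using hx0

/-- An irreducible symmetric Lie algebra `(g,τ)` (i.e. `g^{-τ} ≠ 0` and
the only `τ`-invariant ideals are `0` and `g`) with `g` not semisimple (nonzero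
solvable radical) satisfies `dim g = 1` and `τ = -id`. -/
theorem stmt_9 {L : Type*} [LieRing L] [LieAlgebra ℝ L] [FiniteDimensional ℝ L]
    (τ : L →ₗ⁅ℝ⁆ L) (hτ : ∀ z : L, τ (τ z) = z)
    (hirr₁ : ∃ x : L, τ x = -x ∧ x ≠ 0)
    (hirr₂ : ∀ I : LieIdeal ℝ L, (∀ x ∈ I, τ x ∈ I) → I = ⊥ ∨ I = ⊤)
    (hss : LieAlgebra.radical ℝ L ≠ ⊥) :
    Module.finrank ℝ L = 1 ∧ ∀ x : L, τ x = -x := by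
  obtain ⟨x, hx, hx0⟩ := hirr₁
  have : Nontrivial L := nontrivial_of_ne x 0 hx0
  have : IsSolvable L := isSolvable_of_radical_eq_top <|
    (hirr₂ _ fun _ => apply_mem_radical_of_involutive hτ).resolve_left hss
  have : IsLieAbelian L := (LieModule.trivial_iff_lower_central_eq_bot ℝ L L).mpr <|
    (hirr₂ _ fun _ hy => LieIdeal.derivedSeries_map_le 1 (LieIdeal.mem_map hy)).resolve_right
      (derivedSeries_lt_top_of_solvable ℝ L).ne
  have hirr := Submodule.eq_bot_or_eq_top_of_isLieAbelian hirr₂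
  refine ⟨finrank_eq_one_of_forall_invariant_eq_bot_or_eq_top (f := τ.toLinearMap) hx0 ?_ hirr,
    LinearMap.apply_eq_neg_of_forall_invariant_eq_bot_or_eq_top (τ := τ.toLinearMap) hτ ⟨x, ?_⟩ hirr⟩
  · simp [hx]
  · have := IsAddTorsionFree.of_isTorsionFree ℝ L
    rw [LieHom.coe_toLinearMap, hx, Ne, neg_eq_self]
    exact hx0
end

section
/- Let g₁ be a simple real Lie algebra and g = g₁ ⊕ g₁ with the flip involution τ(x,y) = (y,x). If σ is an involutive automorphism of g commuting with τ, then there exists an involutive automorphism σ₁ of g₁ such that either σ(x,y) = (σ₁(x), σ₁(y)) for all x,y, or σ(x,y) = (σ₁(y), σ₁(x)) for all x,y. -/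
/-!
Write `σ (x, 0) = (a x, c x)`. Commuting with the flip gives `σ (x, y) = (a x + c y, c x + a y)`,
and `a`, `c` are Lie algebra morphisms of `g₁` whose images commute, since `(x, 0)` and `(0, y)`
do. From `σ² = id` one gets `a c = - c a`, so the morphism `a c` has abelian image; as `g₁` is
simple and not abelian, `a c = 0`. Again by simplicity `a` is injective or zero, so `c = 0` or
`a = 0`, and `σ₁` is `a` or `c` respectively.
-/

namespace LieHom

variable {R L M : Type*} [CommRing R] [LieRing L] [LieAlgebra R L] [LieRing M] [LieAlgebra R M]

theorem injective_or_eq_zero [LieAlgebra.IsSimple R L] (f : L →ₗ⁅R⁆ M) :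
    Function.Injective f ∨ f = 0 := by
  rcases LieAlgebra.IsSimple.eq_bot_or_eq_top f.ker with h | h
  · exact Or.inl ((ker_eq_bot f).mp h)
  · exact Or.inr (ext fun x => mem_ker.mp (h ▸ LieSubmodule.mem_top x))

theorem eq_zero_of_lie_apply_eq_zero [LieAlgebra.IsSimple R L] (f : L →ₗ⁅R⁆ M)
    (h : ∀ x y, ⁅f x, f y⁆ = 0) : f = 0 := by
  refine f.injective_or_eq_zero.resolve_left fun hf =>
    LieAlgebra.IsSimple.non_abelian (R := R) (L := L) ⟨fun x y => hf ?_⟩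
  rw [map_lie, h, map_zero]

variable (φ : L × L →ₗ⁅R⁆ L × L)

def blockFst : L →ₗ⁅R⁆ L := (fst R L L).comp (φ.comp (inl R L L))

def blockSnd : L →ₗ⁅R⁆ L := (snd R L L).comp (φ.comp (inl R L L))

variable {φ}

theorem apply_eq_of_comm_swap (hswap : ∀ p, φ p.swap = (φ p).swap) (x y : L) :
    φ (x, y) = (φ.blockFst x + φ.blockSnd y, φ.blockSnd x + φ.blockFst y) := by
  have hinr : φ (0, y) = (φ.blockSnd y, φ.blockFst y) := hswap (y, 0)
  rw [← Prod.fst_add_snd (x, y), map_add, hinr]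
  rfl

theorem lie_blockFst_blockSnd (hswap : ∀ p, φ p.swap = (φ p).swap) (x y : L) :
    ⁅φ.blockFst x, φ.blockSnd y⁆ = 0 := by
  have h : ⁅φ (x, 0), φ (0, y)⁆ = 0 := by
    rw [← φ.map_lie, LieAlgebra.Prod.bracket_apply, lie_zero, zero_lie, Prod.mk_zero_zero,
      map_zero]
  rw [apply_eq_of_comm_swap hswap, apply_eq_of_comm_swap hswap] at h
  simpa using congrArg Prod.fst h

variable (hswap : ∀ p, φ p.swap = (φ p).swap) (hinv : ∀ p, φ (φ p) = p)
include hswap hinv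

theorem blockFst_blockFst_add_blockSnd_blockSnd (x : L) :
    φ.blockFst (φ.blockFst x) + φ.blockSnd (φ.blockSnd x) = x :=
  congrArg Prod.fst ((apply_eq_of_comm_swap hswap _ _).symm.trans (hinv (x, 0)))

theorem blockFst_blockSnd (x : L) :
    φ.blockFst (φ.blockSnd x) = -φ.blockSnd (φ.blockFst x) :=
  eq_neg_of_add_eq_zero_right
    (congrArg Prod.snd ((apply_eq_of_comm_swap hswap _ _).symm.trans (hinv (x, 0))))

theorem blockFst_comp_blockSnd_eq_zero [LieAlgebra.IsSimple R L] :
    φ.blockFst.comp φ.blockSnd = 0 :=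
  eq_zero_of_lie_apply_eq_zero _ fun x y => by
    rw [comp_apply, comp_apply, blockFst_blockSnd hswap hinv y, lie_neg,
      lie_blockFst_blockSnd hswap, neg_zero]

theorem blockSnd_eq_zero_or_blockFst_eq_zero [LieAlgebra.IsSimple R L] :
    φ.blockSnd = 0 ∨ φ.blockFst = 0 := by
  refine φ.blockFst.injective_or_eq_zero.imp_left fun hinj => ext fun x => hinj ?_
  rw [← comp_apply, blockFst_comp_blockSnd_eq_zero hswap hinv, zero_apply, map_zero]

end LieHom

open LieHom in
/-- For a simple real Lie algebra `g₁` and `g = g₁ ⊕ g₁` with the flip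
involution `τ(x,y) = (y,x)`, every involutive automorphism `σ` of `g` (an ℝ-linear
bijection preserving the componentwise bracket) commuting with `τ` is of the form
`σ(x,y) = (σ₁ x, σ₁ y)` or `σ(x,y) = (σ₁ y, σ₁ x)` for an involutive automorphism
`σ₁` of `g₁`. -/
theorem stmt_11 {L : Type*} [LieRing L] [LieAlgebra ℝ L] [LieAlgebra.IsSimple ℝ L]
    (σ : (L × L) ≃ₗ[ℝ] (L × L))
    (hbracket : ∀ p q : L × L,
      σ (⁅p.1, q.1⁆, ⁅p.2, q.2⁆) = (⁅(σ p).1, (σ q).1⁆, ⁅(σ p).2, (σ q).2⁆))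
    (hinv : ∀ p : L × L, σ (σ p) = p)
    (hcomm : ∀ p : L × L, σ (p.2, p.1) = ((σ p).2, (σ p).1)) :
    ∃ σ₁ : L →ₗ⁅ℝ⁆ L, (∀ x : L, σ₁ (σ₁ x) = x) ∧
      ((∀ x y : L, σ (x, y) = (σ₁ x, σ₁ y)) ∨ (∀ x y : L, σ (x, y) = (σ₁ y, σ₁ x))) := by
  let φ : L × L →ₗ⁅ℝ⁆ L × L := { σ.toLinearMap with map_lie' := hbracket _ _ }
  have hswap : ∀ p, φ p.swap = (φ p).swap := hcomm
  have hφφ : ∀ p, φ (φ p) = p := hinv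
  rcases blockSnd_eq_zero_or_blockFst_eq_zero hswap hφφ with hc | ha
  · refine ⟨φ.blockFst, fun x => ?_, Or.inl fun x y => ?_⟩
    · simpa [hc] using blockFst_blockFst_add_blockSnd_blockSnd hswap hφφ x
    · exact (apply_eq_of_comm_swap hswap x y).trans (by simp [hc])
  · refine ⟨φ.blockSnd, fun x => ?_, Or.inr fun x y => ?_⟩
    · simpa [ha] using blockFst_blockFst_add_blockSnd_blockSnd hswap hφφ x
    · exact (apply_eq_of_comm_swap hswap x y).trans (by simp [ha])
end

section
/- Let g₁ be a simple real Lie algebra and σ₁ an involutive automorphism of g₁ whose fixed-point algebra g₁^{σ₁} = ℝ·y₀ is one-dimensional. Then g₁ is three-dimensional, i.e., g₁ is isomorphic to sl₂(ℝ) or su₂(ℂ). -/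
/-!
Let `𝔭` be the `-1`-eigenspace of `σ`, so that `L = K ∙ y₀ ⊕ 𝔭`, `⁅y₀, 𝔭⁆ ⊆ 𝔭` and
`⁅𝔭, 𝔭⁆ ⊆ K ∙ y₀`. If `⁅𝔭, 𝔭⁆ = 0` then `𝔭` is an ideal, which simplicity forbids; rescaling,
`⁅y, z⁆ = y₀` for some `y, z ∈ 𝔭`, and `y₀, y, z` are independent. Conversely, for `q ∈ 𝔭` the
Jacobi identity gives `⁅y₀, q⁆ = ⁅y, ⁅z, q⁆⁆ - ⁅z, ⁅y, q⁆⁆ ∈ span {⁅y, y₀⁆, ⁅z, y₀⁆}`, so every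
bracket lies in `span {y₀, ⁅y, y₀⁆, ⁅z, y₀⁆}`; this span is therefore a nonzero ideal, i.e. `L`.
-/

open Module Submodule LieAlgebra

lemma LinearMap.exists_add_eq_of_involutive {K V : Type*} [Field K] [NeZero (2 : K)]
    [AddCommGroup V] [Module K V] {f : V →ₗ[K] V} (hf : ∀ x, f (f x) = x) (x : V) :
    ∃ u v, f u = u ∧ f v = -v ∧ u + v = x := by
  refine ⟨(2 : K)⁻¹ • (x + f x), (2 : K)⁻¹ • (x - f x), by simp [hf, add_comm],
    by rw [map_smul, map_sub, hf, ← smul_neg, neg_sub], ?_⟩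
  rw [← smul_add, add_add_sub_cancel, ← two_smul K, smul_smul, inv_mul_cancel₀ two_ne_zero,
    one_smul]

lemma LieAlgebra.IsSimple.eq_bot_or_eq_top_of_lie_mem {R L : Type*} [CommRing R] [LieRing L]
    [LieAlgebra R L] [IsSimple R L] (S : Submodule R L) (hS : ∀ x : L, ∀ m ∈ S, ⁅x, m⁆ ∈ S) :
    S = ⊥ ∨ S = ⊤ :=
  (IsSimple.eq_bot_or_eq_top ({ S with lie_mem := hS _ _ } : LieIdeal R L)).imp
    (fun h ↦ by simpa using congrArg LieSubmodule.toSubmodule h)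
    (fun h ↦ by simpa using congrArg LieSubmodule.toSubmodule h)

lemma lie_lie_mem_span_pair {R L : Type*} [CommRing R] [LieRing L] [LieAlgebra R L]
    {y z q w : L} (hy : ⁅y, q⁆ ∈ R ∙ w) (hz : ⁅z, q⁆ ∈ R ∙ w) :
    ⁅⁅y, z⁆, q⁆ ∈ span R {⁅y, w⁆, ⁅z, w⁆} := by
  obtain ⟨a, ha⟩ := mem_span_singleton.1 hy
  obtain ⟨b, hb⟩ := mem_span_singleton.1 hz
  rw [lie_lie, ← ha, ← hb, lie_smul, lie_smul]
  exact sub_mem (smul_mem _ _ (subset_span (by simp))) (smul_mem _ _ (subset_span (by simp)))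

section

variable {K L : Type*} [Field K] [LieRing L] [LieAlgebra K L]

lemma linearIndependent_pair_of_lie_ne_zero {y z : L} (h : ⁅y, z⁆ ≠ 0) :
    LinearIndependent K ![y, z] := by
  refine LinearIndependent.pair_iff.2 fun s t hst ↦ ⟨?_, ?_⟩
  · have := congrArg (⁅·, z⁆) hst
    simpa [add_lie, smul_lie, h] using this
  · have := congrArg (⁅y, ·⁆) hst
    simpa [lie_add, lie_smul, h] using this

lemma finrank_le_three_of_span_eq_top {V : Type*} [AddCommGroup V] [Module K V] {a b c : V}
    (h : span K {a, b, c} = ⊤) : finrank K V ≤ 3 := by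
  classical
  rw [← finrank_top, ← h]
  exact (finrank_span_le_card _).trans (by simpa using Finset.card_le_three)

namespace LieHom

def negEigenspace (σ : L →ₗ⁅K⁆ L) : Submodule K L :=
  Module.End.eigenspace (σ : Module.End K L) (-1)

variable {σ : L →ₗ⁅K⁆ L}

@[simp] lemma mem_negEigenspace {x : L} : x ∈ σ.negEigenspace ↔ σ x = -x := by
  simp [negEigenspace]

lemma lie_mem_negEigenspace {y p : L} (hy : σ y = y) (hp : p ∈ σ.negEigenspace) :
    ⁅y, p⁆ ∈ σ.negEigenspace := by
  rw [mem_negEigenspace] at hp ⊢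
  rw [map_lie, hy, hp, lie_neg]

lemma map_lie_of_mem_negEigenspace {p q : L} (hp : p ∈ σ.negEigenspace)
    (hq : q ∈ σ.negEigenspace) : σ ⁅p, q⁆ = ⁅p, q⁆ := by
  rw [mem_negEigenspace] at hp hq
  rw [map_lie, hp, hq, neg_lie, lie_neg, neg_neg]

lemma eq_zero_of_mem_negEigenspace [NeZero (2 : K)] {x : L} (hx : σ x = x)
    (hp : x ∈ σ.negEigenspace) : x = 0 := by
  rw [mem_negEigenspace, hx, eq_neg_iff_add_eq_zero, ← two_smul K] at hp
  exact (smul_eq_zero.1 hp).resolve_left two_ne_zero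

lemma exists_fixed_add_mem_negEigenspace [NeZero (2 : K)] (hσ : ∀ x, σ (σ x) = x) (x : L) :
    ∃ u p, σ u = u ∧ p ∈ σ.negEigenspace ∧ u + p = x :=
  let ⟨u, p, hu, hp, hx⟩ := LinearMap.exists_add_eq_of_involutive (f := (σ : L →ₗ[K] L)) hσ x
  ⟨u, p, hu, mem_negEigenspace.2 hp, hx⟩

variable [NeZero (2 : K)] {y₀ y z : L}

lemma exists_lie_ne_zero_of_mem_negEigenspace [IsSimple K L] (hσ : ∀ x, σ (σ x) = x)
    (hfix : ∀ x, σ x = x ↔ x ∈ K ∙ y₀) (hy₀ : y₀ ≠ 0) :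
    ∃ p ∈ σ.negEigenspace, ∃ q ∈ σ.negEigenspace, ⁅p, q⁆ ≠ 0 := by
  by_contra! h
  have hideal : ∀ x : L, ∀ m ∈ σ.negEigenspace, ⁅x, m⁆ ∈ σ.negEigenspace := by
    intro x m hm
    obtain ⟨u, p, hu, hp, rfl⟩ := exists_fixed_add_mem_negEigenspace hσ x
    rw [add_lie, h p hp m hm, add_zero]
    exact lie_mem_negEigenspace hu hm
  rcases IsSimple.eq_bot_or_eq_top_of_lie_mem _ hideal with hbot | htop
  · have hline : ∀ x, x ∈ K ∙ y₀ := fun x ↦ (hfix x).1 <| by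
      have hx : x - σ x ∈ σ.negEigenspace := by simp [hσ]
      rw [hbot, Submodule.mem_bot, sub_eq_zero] at hx
      exact hx.symm
    refine IsSimple.non_abelian (R := K) (L := L) ⟨fun u v ↦ ?_⟩
    obtain ⟨a, rfl⟩ := mem_span_singleton.1 (hline u)
    obtain ⟨b, rfl⟩ := mem_span_singleton.1 (hline v)
    simp
  · exact hy₀ <| eq_zero_of_mem_negEigenspace ((hfix y₀).2 (mem_span_singleton_self y₀))
      (htop ▸ mem_top)

lemma exists_mem_negEigenspace_lie_eq [IsSimple K L] (hσ : ∀ x, σ (σ x) = x)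
    (hfix : ∀ x, σ x = x ↔ x ∈ K ∙ y₀) (hy₀ : y₀ ≠ 0) :
    ∃ y ∈ σ.negEigenspace, ∃ z ∈ σ.negEigenspace, ⁅y, z⁆ = y₀ := by
  obtain ⟨p, hp, q, hq, hpq⟩ := exists_lie_ne_zero_of_mem_negEigenspace hσ hfix hy₀
  obtain ⟨c, hc⟩ := mem_span_singleton.1 ((hfix _).1 (map_lie_of_mem_negEigenspace hp hq))
  have hc0 : c ≠ 0 := by
    rintro rfl
    exact hpq (by rw [← hc, zero_smul])
  refine ⟨c⁻¹ • p, smul_mem _ _ hp, q, hq, ?_⟩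
  rw [smul_lie, ← hc, smul_smul, inv_mul_cancel₀ hc0, one_smul]

lemma lie_mem_span_of_lie_eq (hσ : ∀ x, σ (σ x) = x) (hfix : ∀ x, σ x = x ↔ x ∈ K ∙ y₀)
    (hy : y ∈ σ.negEigenspace) (hz : z ∈ σ.negEigenspace) (hyz : ⁅y, z⁆ = y₀) (u v : L) :
    ⁅u, v⁆ ∈ span K {y₀, ⁅y, y₀⁆, ⁅z, y₀⁆} := by
  set S := span K {y₀, ⁅y, y₀⁆, ⁅z, y₀⁆}
  have hlie : ∀ p ∈ σ.negEigenspace, ∀ q ∈ σ.negEigenspace, ⁅p, q⁆ ∈ K ∙ y₀ :=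
    fun p hp q hq ↦ (hfix _).1 (map_lie_of_mem_negEigenspace hp hq)
  have hy₀S : y₀ ∈ S := subset_span (by simp)
  have hadS : ∀ q ∈ σ.negEigenspace, ⁅y₀, q⁆ ∈ S := by
    intro q hq
    rw [← hyz]
    exact span_mono (Set.subset_insert _ _)
      (lie_lie_mem_span_pair (hlie y hy q hq) (hlie z hz q hq))
  obtain ⟨u₁, p, hu₁, hp, rfl⟩ := exists_fixed_add_mem_negEigenspace hσ u
  obtain ⟨v₁, q, hv₁, hq, rfl⟩ := exists_fixed_add_mem_negEigenspace hσ v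
  obtain ⟨a, rfl⟩ := mem_span_singleton.1 ((hfix u₁).1 hu₁)
  obtain ⟨b, rfl⟩ := mem_span_singleton.1 ((hfix v₁).1 hv₁)
  rw [add_lie, lie_add, lie_add, smul_lie, smul_lie, lie_smul, lie_smul, lie_self, smul_zero,
    smul_zero, zero_add, ← lie_skew p y₀]
  exact add_mem (smul_mem _ _ (hadS q hq)) (add_mem (smul_mem _ _ (neg_mem (hadS p hp)))
    ((span_singleton_le_iff_mem _ _).2 hy₀S (hlie p hp q hq)))

lemma span_eq_top_of_lie_eq [IsSimple K L] (hσ : ∀ x, σ (σ x) = x)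
    (hfix : ∀ x, σ x = x ↔ x ∈ K ∙ y₀) (hy₀ : y₀ ≠ 0) (hy : y ∈ σ.negEigenspace)
    (hz : z ∈ σ.negEigenspace) (hyz : ⁅y, z⁆ = y₀) :
    span K {y₀, ⁅y, y₀⁆, ⁅z, y₀⁆} = ⊤ :=
  (IsSimple.eq_bot_or_eq_top_of_lie_mem _ fun u v _ ↦
    lie_mem_span_of_lie_eq hσ hfix hy hz hyz u v).resolve_left fun h ↦
      hy₀ ((Submodule.mem_bot K).1 (h ▸ subset_span (by simp)))

lemma linearIndependent_of_lie_eq (hfix : ∀ x, σ x = x ↔ x ∈ K ∙ y₀) (hy₀ : y₀ ≠ 0)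
    (hy : y ∈ σ.negEigenspace) (hz : z ∈ σ.negEigenspace) (hyz : ⁅y, z⁆ = y₀) :
    LinearIndependent K ![y₀, y, z] := by
  refine linearIndependent_finCons.2
    ⟨linearIndependent_pair_of_lie_ne_zero (hyz ▸ hy₀), fun h ↦ hy₀ ?_⟩
  refine eq_zero_of_mem_negEigenspace ((hfix y₀).2 (mem_span_singleton_self y₀)) (span_le.2 ?_ h)
  rintro _ ⟨i, rfl⟩
  fin_cases i <;> assumption

end LieHom

end

/-- A simple real Lie algebra `g₁` admitting an involutive automorphism
`σ₁` with one-dimensional fixed-point algebra `g₁^{σ₁} = ℝ·y₀` is three-dimensional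
(hence isomorphic to `sl₂(ℝ)` or `su₂(ℂ)`). -/
theorem stmt_15 {L : Type*} [LieRing L] [LieAlgebra ℝ L] [LieAlgebra.IsSimple ℝ L]
    [FiniteDimensional ℝ L]
    (σ₁ : L →ₗ⁅ℝ⁆ L) (hσ₁ : ∀ z : L, σ₁ (σ₁ z) = z)
    (y₀ : L) (hy₀ : y₀ ≠ 0)
    (hfix : {x : L | σ₁ x = x} = (Submodule.span ℝ {y₀} : Submodule ℝ L)) :
    Module.finrank ℝ L = 3 := by
  have hfix' : ∀ x, σ₁ x = x ↔ x ∈ ℝ ∙ y₀ := Set.ext_iff.1 hfix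
  obtain ⟨y, hy, z, hz, hyz⟩ := LieHom.exists_mem_negEigenspace_lie_eq hσ₁ hfix' hy₀
  refine le_antisymm
    (finrank_le_three_of_span_eq_top (LieHom.span_eq_top_of_lie_eq hσ₁ hfix' hy₀ hy hz hyz)) ?_
  simpa using (LieHom.linearIndependent_of_lie_eq hfix' hy₀ hy hz hyz).fintype_card_le_finrank
end

section
/- Let g₁ be a simple real Lie algebra, g = g₁ ⊕ g₁ with flip τ(x,y) = (y,x), and suppose σ(x,y) = (σ₁(x), σ₁(y)) for an involutive automorphism σ₁ of g₁ with dim(g^{−τ} ∩ g^{−σ}) = 1. Then g₁^{−σ₁} is one-dimensional, which forces ℝ·y₀ = g₁^{−σ₁} to be an ideal of g₁, contradicting simplicity. Hence no such dissecting triple exists with σ of diagonal form. -/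
/-!
Projecting to the first factor identifies `g^{-τ} ∩ g^{-σ}` with the `-1`-eigenspace `S` of `σ₁`.
If `S` is a line it is abelian, and then it is an ideal: for `y ∈ S` the element `x - σ₁ x` lies
in `S`, so `⁅x, y⁆ = ⁅σ₁ x, y⁆` and `σ₁ ⁅x, y⁆ = -⁅x, y⁆`. A simple Lie algebra has no nonzero
abelian ideal, so `S = 0`.
-/

open Module LieAlgebra

theorem LinearMap.finrank_ker_snd_add_fst_inf_ker_comp_fst {R M N : Type*} [Ring R]
    [AddCommGroup M] [Module R M] [AddCommGroup N] [Module R N] (f : M →ₗ[R] N) :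
    finrank R ↥(ker (snd R M M + fst R M M) ⊓ ker (f.comp (fst R M M))) = finrank R (ker f) :=
  LinearEquiv.finrank_eq
    { toFun p := ⟨p.1.1, p.2.2⟩
      map_add' _ _ := rfl
      map_smul' _ _ := rfl
      invFun x := ⟨(x.1, -x.1), by simp, by simp⟩
      left_inv := by
        rintro ⟨⟨a, b⟩, hab, -⟩
        have hb : b = -a := eq_neg_of_add_eq_zero_left hab
        ext <;> simp [hb]
      right_inv _ := rfl }

theorem Submodule.lie_eq_zero_of_finrank_eq_one {K L : Type*} [Field K] [LieRing L]
    [LieAlgebra K L] {S : Submodule K L} (hS : finrank K S = 1) {a b : L} (ha : a ∈ S)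
    (hb : b ∈ S) : ⁅a, b⁆ = 0 := by
  obtain ⟨v, -, hv⟩ := finrank_eq_one_iff'.mp hS
  obtain ⟨c, hc⟩ := hv ⟨a, ha⟩
  obtain ⟨d, hd⟩ := hv ⟨b, hb⟩
  obtain rfl : c • (v : L) = a := congrArg Subtype.val hc
  obtain rfl : d • (v : L) = b := congrArg Subtype.val hd
  simp

namespace LieHom

theorem map_lie_eq_neg {R L : Type*} [CommRing R] [LieRing L] [LieAlgebra R L]
    {σ : L →ₗ⁅R⁆ L} (hσ : Function.Involutive σ)
    (hcomm : ∀ a b, σ a = -a → σ b = -b → ⁅a, b⁆ = 0) (x : L) {y : L} (hy : σ y = -y) :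
    σ ⁅x, y⁆ = -⁅x, y⁆ := by
  have hx : σ (x - σ x) = -(x - σ x) := by rw [map_sub, hσ x, neg_sub]
  have : ⁅σ x, y⁆ = ⁅x, y⁆ := by
    rw [← sub_eq_zero, ← sub_lie, ← neg_sub, neg_lie, hcomm _ _ hx hy, neg_zero]
  rw [map_lie, hy, lie_neg, this]

theorem finrank_ker_add_id_ne_one {K L : Type*} [Field K] [LieRing L] [LieAlgebra K L]
    [HasTrivialRadical K L] {σ : L →ₗ⁅K⁆ L} (hσ : Function.Involutive σ) :
    finrank K (LinearMap.ker ((σ : L →ₗ[K] L) + LinearMap.id)) ≠ 1 := by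
  set S := LinearMap.ker ((σ : L →ₗ[K] L) + LinearMap.id)
  have mem_S (y : L) : y ∈ S ↔ σ y = -y := by
    simp [S, eq_neg_iff_add_eq_zero]
  intro hS
  have hcomm (a b : L) (ha : σ a = -a) (hb : σ b = -b) : ⁅a, b⁆ = 0 :=
    Submodule.lie_eq_zero_of_finrank_eq_one hS ((mem_S a).2 ha) ((mem_S b).2 hb)
  let I : LieIdeal K L :=
    { S with lie_mem := fun {x y} hy => (mem_S _).2 (map_lie_eq_neg hσ hcomm x ((mem_S y).1 hy)) }
  have : IsLieAbelian I :=
    ⟨fun a b => Subtype.ext (hcomm a b ((mem_S a).1 a.2) ((mem_S b).1 b.2))⟩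
  have hI : I = ⊥ := (hasTrivialRadical_iff_no_abelian_ideals K L).1 ‹_› I this
  have : S = ⊥ := congrArg LieSubmodule.toSubmodule hI
  rw [this, finrank_bot] at hS
  exact zero_ne_one hS

end LieHom

theorem stmt_17_general {L : Type*} [LieRing L] [LieAlgebra ℝ L] [LieAlgebra.IsSimple ℝ L]
    (σ₁ : L →ₗ⁅ℝ⁆ L) (hσ₁ : ∀ z : L, σ₁ (σ₁ z) = z) :
    -- the subspace `g^{-τ} ∩ g^{-σ} = {(x, y) : y = -x, σ₁ x = -x}` of `g = g₁ × g₁`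
    Module.finrank ℝ
      ↥(LinearMap.ker (LinearMap.snd ℝ L L + LinearMap.fst ℝ L L) ⊓
        LinearMap.ker (((σ₁ : L →ₗ[ℝ] L) + LinearMap.id).comp (LinearMap.fst ℝ L L)))
      ≠ 1 := by
  rw [LinearMap.finrank_ker_snd_add_fst_inf_ker_comp_fst]
  exact LieHom.finrank_ker_add_id_ne_one hσ₁

/-- Let `g₁` be a simple real Lie algebra, `g = g₁ ⊕ g₁` with the flip
`τ(x,y) = (y,x)`, and `σ(x,y) = (σ₁ x, σ₁ y)` for an involutive automorphism `σ₁`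
of `g₁`. Then `g^{-τ} ∩ g^{-σ} = {(x,-x) : σ₁ x = -x}` is never one-dimensional:
otherwise `g₁^{-σ₁} = ℝ·y₀` would be an ideal of `g₁`, contradicting simplicity.
Hence there is no dissecting triple with `σ` of diagonal form. -/
theorem stmt_17 {L : Type*} [LieRing L] [LieAlgebra ℝ L] [LieAlgebra.IsSimple ℝ L]
    [FiniteDimensional ℝ L]
    (σ₁ : L →ₗ⁅ℝ⁆ L) (hσ₁ : ∀ z : L, σ₁ (σ₁ z) = z) :
    -- the subspace `g^{-τ} ∩ g^{-σ} = {(x, y) : y = -x, σ₁ x = -x}` of `g = g₁ × g₁`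
    Module.finrank ℝ
      ↥(LinearMap.ker (LinearMap.snd ℝ L L + LinearMap.fst ℝ L L) ⊓
        LinearMap.ker (((σ₁ : L →ₗ[ℝ] L) + LinearMap.id).comp (LinearMap.fst ℝ L L)))
      ≠ 1 :=
  stmt_17_general σ₁ hσ₁
end
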